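/- Let J be a B(H)-ideal and S ∈ J such that the smallest J-ideal (S)_J containing S is not a two-sided ideal of B(H). Then (S)_J = ℂS ⊕' N as an internal direct sum of ℂ-subspaces, where N := JS + SJ + J(S)J (with J(S)J the set of finite sums Σ A_iSB_i, A_i, B_i ∈ J); in particular, if αS + X = βS + Y with α, β ∈ ℂ and X, Y ∈ N, then α = β. Consequently the formula τ(αS + X) := α for X ∈ N defines a ℂ-linear functional τ on (S)_J, and τ is a subideal-trace: τ(UYU*) = τ(Y) for every Y ∈ (S)_J and every U ∈ U_J(H). -/

import Mathlib

open Pointwise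

variable {H : Type*} [NormedAddCommGroup H] [InnerProductSpace ℂ H] [CompleteSpace H]
  [TopologicalSpace.SeparableSpace H]

/-- A `B(H)`-ideal: a two-sided ideal of the algebra `B(H)` of bounded operators on `H`. -/
def IsBHIdeal (J : Set (H →L[ℂ] H)) : Prop :=
  0 ∈ J ∧ (∀ x ∈ J, ∀ y ∈ J, x + y ∈ J) ∧
    (∀ (A : H →L[ℂ] H), ∀ x ∈ J, A * x ∈ J) ∧
    (∀ (A : H →L[ℂ] H), ∀ x ∈ J, x * A ∈ J)

/-- `I` is a `J`-ideal (a subideal): a `ℂ`-linear subspace of `B(H)` contained in `J` that is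
closed under left and right multiplication by elements of `J`. -/
def IsSubideal (J I : Set (H →L[ℂ] H)) : Prop :=
  I ⊆ J ∧ 0 ∈ I ∧ (∀ x ∈ I, ∀ y ∈ I, x + y ∈ I) ∧
    (∀ (c : ℂ), ∀ x ∈ I, c • x ∈ I) ∧
    (∀ A ∈ J, ∀ x ∈ I, A * x ∈ I ∧ x * A ∈ I)

/-- `(𝒮)_J`, the smallest `J`-ideal containing the set `𝒮`. -/
def subidealGen (J 𝒮 : Set (H →L[ℂ] H)) : Set (H →L[ℂ] H) :=
  ⋂₀ {I | IsSubideal J I ∧ 𝒮 ⊆ I}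

/-- `(𝒮)`, the smallest `B(H)`-ideal containing the set `𝒮`. -/
def idealGen (𝒮 : Set (H →L[ℂ] H)) : Set (H →L[ℂ] H) :=
  ⋂₀ {I | IsBHIdeal I ∧ 𝒮 ⊆ I}

/-- The product `IJ` of two ideals: the set of finite sums `Σ Xᵢ Yᵢ` with `Xᵢ ∈ I`, `Yᵢ ∈ J`. -/
def idealProd (I J : Set (H →L[ℂ] H)) : Set (H →L[ℂ] H) :=
  {T | ∃ (n : ℕ) (X Y : Fin n → (H →L[ℂ] H)),
    (∀ i, X i ∈ I) ∧ (∀ i, Y i ∈ J) ∧ T = ∑ i, X i * Y i}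

/-- `J(𝒮)J`: the set of finite sums `Σ Aᵢ Xᵢ Bᵢ` with `Aᵢ, Bᵢ ∈ J` and `Xᵢ ∈ (𝒮)`. -/
def JSJ (J 𝒮 : Set (H →L[ℂ] H)) : Set (H →L[ℂ] H) :=
  {T | ∃ (n : ℕ) (A X B : Fin n → (H →L[ℂ] H)),
    (∀ i, A i ∈ J) ∧ (∀ i, B i ∈ J) ∧ (∀ i, X i ∈ idealGen 𝒮) ∧
    T = ∑ i, A i * X i * B i}

/-- `U_J(H)`: the unitaries of the form `1 + A` with `A ∈ J`. -/
def unitaryJ (J : Set (H →L[ℂ] H)) : Set (H →L[ℂ] H) :=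
  {U | U ∈ unitary (H →L[ℂ] H) ∧ U - 1 ∈ J}

/-- `N = JS + SJ + J(S)J` for a single operator `S`. -/
def principalN (J : Set (H →L[ℂ] H)) (S : H →L[ℂ] H) : Set (H →L[ℂ] H) :=
  {T | ∃ A ∈ J, ∃ B ∈ J, ∃ (m : ℕ) (A' B' : Fin m → (H →L[ℂ] H)),
    (∀ i, A' i ∈ J) ∧ (∀ i, B' i ∈ J) ∧ T = A * S + S * B + ∑ i, A' i * S * B' i}

/-! If `S ∉ N`, the functional `αS + X ↦ α` (`X ∈ N`) is well defined on `(S)_J = ℂS + N`, and it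
is a subideal-trace because `UYU* - Y ∈ N` whenever `U - 1 ∈ J`. So the content is that `S ∈ N`
forces `TS, ST ∈ N` for every `T ∈ B(H)`, making `(S)_J` a `B(H)`-ideal. This is clear if `1 ∈ J`.
Otherwise `J` consists of compact operators (Calkin), so in `S = A₀S + SB₀ + Σ AᵢSBᵢ` the operators
`1 - A₀` and `1 - B₀` are invertible modulo finite rank, and finite-rank operators lie in `JSJ` as
soon as `S ≠ 0`. -/

open InnerProductSpace ContinuousLinearMap

section Algebra

variable {E : Type*} [NormedAddCommGroup E] [InnerProductSpace ℂ E]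
  {J : Set (E →L[ℂ] E)} {S A B T X Y : E →L[ℂ] E}

namespace IsBHIdeal

lemma mul_mem_left (hJ : IsBHIdeal J) (A : E →L[ℂ] E) (hX : X ∈ J) : A * X ∈ J :=
  hJ.2.2.1 A X hX

lemma mul_mem_right (hJ : IsBHIdeal J) (A : E →L[ℂ] E) (hX : X ∈ J) : X * A ∈ J :=
  hJ.2.2.2 A X hX

def toSubmodule (hJ : IsBHIdeal J) : Submodule ℂ (E →L[ℂ] E) where
  carrier := J
  zero_mem' := hJ.1
  add_mem' ha hb := hJ.2.1 _ ha _ hb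
  smul_mem' c X hX := by simpa using hJ.mul_mem_left (c • 1) hX

@[simp] lemma mem_toSubmodule (hJ : IsBHIdeal J) : X ∈ hJ.toSubmodule ↔ X ∈ J :=
  Iff.rfl

end IsBHIdeal

def IsSubideal.toSubmodule {I : Set (E →L[ℂ] E)} (hI : IsSubideal J I) :
    Submodule ℂ (E →L[ℂ] E) where
  carrier := I
  zero_mem' := hI.2.1
  add_mem' ha hb := hI.2.2.1 _ ha _ hb
  smul_mem' c _ hx := hI.2.2.2.1 c _ hx

variable (J S) in
def principalNSpan : Submodule ℂ (E →L[ℂ] E) :=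
  Submodule.span ℂ
    ({T | ∃ A ∈ J, T = A * S} ∪ {T | ∃ B ∈ J, T = S * B} ∪ {T | ∃ A ∈ J, ∃ B ∈ J, T = A * S * B})

namespace principalNSpan

lemma left_mem (hA : A ∈ J) : A * S ∈ principalNSpan J S :=
  Submodule.subset_span (.inl (.inl ⟨A, hA, rfl⟩))

lemma right_mem (hB : B ∈ J) : S * B ∈ principalNSpan J S :=
  Submodule.subset_span (.inl (.inr ⟨B, hB, rfl⟩))

lemma sandwich_mem (hA : A ∈ J) (hB : B ∈ J) : A * S * B ∈ principalNSpan J S :=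
  Submodule.subset_span (.inr ⟨A, hA, B, hB, rfl⟩)

lemma le_of_forall {P : Submodule ℂ (E →L[ℂ] E)} (hl : ∀ A ∈ J, A * S ∈ P)
    (hr : ∀ B ∈ J, S * B ∈ P) (hlr : ∀ A ∈ J, ∀ B ∈ J, A * S * B ∈ P) :
    principalNSpan J S ≤ P := by
  rw [principalNSpan, Submodule.span_le]
  rintro _ ((⟨A, hA, rfl⟩ | ⟨B, hB, rfl⟩) | ⟨A, hA, B, hB, rfl⟩)
  exacts [hl A hA, hr B hB, hlr A hA B hB]

lemma le_toSubmodule (hJ : IsBHIdeal J) (hS : S ∈ J) : principalNSpan J S ≤ hJ.toSubmodule :=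
  le_of_forall (fun A _ => hJ.mem_toSubmodule.2 (hJ.mul_mem_left A hS))
    (fun B _ => hJ.mem_toSubmodule.2 (hJ.mul_mem_right B hS))
    (fun A _ B _ => hJ.mem_toSubmodule.2 (hJ.mul_mem_right B (hJ.mul_mem_left A hS)))

lemma mul_mem_right (hJ : IsBHIdeal J) (hB : B ∈ J) (hX : X ∈ principalNSpan J S) :
    X * B ∈ principalNSpan J S := by
  refine le_of_forall (P := (principalNSpan J S).comap (LinearMap.mulRight ℂ B))
    (fun A hA => ?_) (fun B' hB' => ?_) (fun A hA B' hB' => ?_) hX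
  · exact sandwich_mem hA hB
  · simpa [mul_assoc] using right_mem (hJ.mul_mem_right B hB')
  · simpa [mul_assoc] using sandwich_mem hA (hJ.mul_mem_right B hB')

lemma mul_mem_left_of_mul_mem (hJ : IsBHIdeal J) (hT : T * S ∈ principalNSpan J S)
    (hX : X ∈ principalNSpan J S) : T * X ∈ principalNSpan J S := by
  refine le_of_forall (P := (principalNSpan J S).comap (LinearMap.mulLeft ℂ T))
    (fun A hA => ?_) (fun B hB => ?_) (fun A hA B hB => ?_) hX
  · simpa [mul_assoc] using left_mem (hJ.mul_mem_left T hA)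
  · simpa [mul_assoc] using mul_mem_right hJ hB hT
  · simpa [mul_assoc] using sandwich_mem (hJ.mul_mem_left T hA) hB

lemma mul_mem_left (hJ : IsBHIdeal J) (hA : A ∈ J) (hX : X ∈ principalNSpan J S) :
    A * X ∈ principalNSpan J S :=
  mul_mem_left_of_mul_mem hJ (left_mem hA) hX

lemma mul_mem_right_of_mul_mem (hJ : IsBHIdeal J) (hT : S * T ∈ principalNSpan J S)
    (hX : X ∈ principalNSpan J S) : X * T ∈ principalNSpan J S := by
  refine le_of_forall (P := (principalNSpan J S).comap (LinearMap.mulRight ℂ T))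
    (fun A hA => ?_) (fun B hB => ?_) (fun A hA B hB => ?_) hX
  · simpa [mul_assoc] using mul_mem_left hJ hA hT
  · simpa [mul_assoc] using right_mem (hJ.mul_mem_right T hB)
  · simpa [mul_assoc] using sandwich_mem hA (hJ.mul_mem_right T hB)

lemma mul_sandwich_mul_mem (hJ : IsBHIdeal J) (hA : A ∈ J) (hB : B ∈ J) (X Y : E →L[ℂ] E) :
    X * (A * S * B) * Y ∈ principalNSpan J S := by
  simpa [mul_assoc] using sandwich_mem (hJ.mul_mem_left X hA) (hJ.mul_mem_right Y hB)

lemma mul_sum_sandwich_mul_mem (hJ : IsBHIdeal J) {m : ℕ} {A B : Fin m → E →L[ℂ] E}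
    (hA : ∀ i, A i ∈ J) (hB : ∀ i, B i ∈ J) (X Y : E →L[ℂ] E) :
    X * (∑ i, A i * S * B i) * Y ∈ principalNSpan J S := by
  rw [Finset.mul_sum, Finset.sum_mul]
  exact Submodule.sum_mem _ fun i _ => mul_sandwich_mul_mem hJ (hA i) (hB i) X Y

end principalNSpan

lemma principalN_subset_principalNSpan : principalN J S ⊆ principalNSpan J S := by
  rintro _ ⟨A, hA, B, hB, m, A', B', hA', hB', rfl⟩
  exact add_mem (add_mem (principalNSpan.left_mem hA) (principalNSpan.right_mem hB))
    (Submodule.sum_mem _ fun i _ => principalNSpan.sandwich_mem (hA' i) (hB' i))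

def principalNSubmodule (hJ : IsBHIdeal J) (S : E →L[ℂ] E) : Submodule ℂ (E →L[ℂ] E) where
  carrier := principalN J S
  zero_mem' := ⟨0, hJ.1, 0, hJ.1, 0, Fin.elim0, Fin.elim0, (·.elim0), (·.elim0), by simp⟩
  add_mem' := by
    rintro _ _ ⟨A, hA, B, hB, m, A', B', hA', hB', rfl⟩ ⟨C, hC, D, hD, n, C', D', hC', hD', rfl⟩
    refine ⟨A + C, hJ.2.1 _ hA _ hC, B + D, hJ.2.1 _ hB _ hD, m + n, Fin.append A' C',
      Fin.append B' D', Fin.addCases (by simpa using hA') (by simpa using hC'),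
      Fin.addCases (by simpa using hB') (by simpa using hD'), ?_⟩
    simp only [Fin.sum_univ_add, Fin.append_left, Fin.append_right, add_mul, mul_add]
    abel
  smul_mem' := by
    rintro c _ ⟨A, hA, B, hB, m, A', B', hA', hB', rfl⟩
    refine ⟨c • A, hJ.toSubmodule.smul_mem c hA, c • B, hJ.toSubmodule.smul_mem c hB, m,
      fun i => c • A' i, B', fun i => hJ.toSubmodule.smul_mem c (hA' i), hB', ?_⟩
    simp only [smul_add, smul_mul_assoc, mul_smul_comm, Finset.smul_sum]

lemma mem_principalN_iff (hJ : IsBHIdeal J) : X ∈ principalN J S ↔ X ∈ principalNSpan J S := by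
  refine ⟨fun hX => principalN_subset_principalNSpan hX, fun hX => ?_⟩
  refine principalNSpan.le_of_forall (P := principalNSubmodule hJ S)
    (fun A hA => ?_) (fun B hB => ?_) (fun A hA B hB => ?_) hX
  · exact ⟨A, hA, 0, hJ.1, 0, Fin.elim0, Fin.elim0, (·.elim0), (·.elim0), by simp⟩
  · exact ⟨0, hJ.1, B, hB, 0, Fin.elim0, Fin.elim0, (·.elim0), (·.elim0), by simp⟩
  · exact ⟨0, hJ.1, 0, hJ.1, 1, fun _ => A, fun _ => B, fun _ => hA, fun _ => hB, by simp⟩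

variable (J S) in
def principalSubideal : Submodule ℂ (E →L[ℂ] E) := (ℂ ∙ S) ⊔ principalNSpan J S

lemma coe_principalSubideal (hJ : IsBHIdeal J) :
    (principalSubideal J S : Set (E →L[ℂ] E)) =
      {T | ∃ α : ℂ, ∃ X ∈ principalN J S, T = α • S + X} := by
  ext T
  simp only [SetLike.mem_coe, principalSubideal, Submodule.mem_sup, Submodule.mem_span_singleton,
    Set.mem_ofPred_eq, mem_principalN_iff hJ]
  constructor
  · rintro ⟨_, ⟨α, rfl⟩, X, hX, rfl⟩
    exact ⟨α, X, hX, rfl⟩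
  · rintro ⟨α, X, hX, rfl⟩
    exact ⟨_, ⟨α, rfl⟩, X, hX, rfl⟩

namespace principalSubideal

lemma mul_left_mem_principalNSpan (hJ : IsBHIdeal J) (hA : A ∈ J)
    (hY : Y ∈ principalSubideal J S) : A * Y ∈ principalNSpan J S := by
  refine (sup_le ?_ ?_ : _ ≤ (principalNSpan J S).comap (LinearMap.mulLeft ℂ A)) hY
  · simpa [Submodule.span_singleton_le_iff_mem] using principalNSpan.left_mem hA
  · exact fun X hX => principalNSpan.mul_mem_left hJ hA hX

lemma mul_right_mem_principalNSpan (hJ : IsBHIdeal J) (hA : A ∈ J)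
    (hY : Y ∈ principalSubideal J S) : Y * A ∈ principalNSpan J S := by
  refine (sup_le ?_ ?_ : _ ≤ (principalNSpan J S).comap (LinearMap.mulRight ℂ A)) hY
  · simpa [Submodule.span_singleton_le_iff_mem] using principalNSpan.right_mem hA
  · exact fun X hX => principalNSpan.mul_mem_right hJ hA hX

lemma isSubideal (hJ : IsBHIdeal J) (hS : S ∈ J) : IsSubideal J (principalSubideal J S) := by
  refine ⟨?_, zero_mem _, fun _ hx _ hy => add_mem hx hy, fun c _ hx => Submodule.smul_mem _ c hx,
    fun A hA Y hY => ⟨Submodule.mem_sup_right (mul_left_mem_principalNSpan hJ hA hY),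
      Submodule.mem_sup_right (mul_right_mem_principalNSpan hJ hA hY)⟩⟩
  exact sup_le ((Submodule.span_singleton_le_iff_mem _ _).2 hS)
    (principalNSpan.le_toSubmodule hJ hS)

lemma isBHIdeal (hJ : IsBHIdeal J)
    (h : ∀ T, T * S ∈ principalNSpan J S ∧ S * T ∈ principalNSpan J S) :
    IsBHIdeal (principalSubideal J S : Set (E →L[ℂ] E)) := by
  refine ⟨zero_mem _, fun _ hx _ hy => add_mem hx hy, fun T Y hY => ?_, fun T Y hY => ?_⟩
  · refine (sup_le ?_ ?_ : _ ≤ (principalSubideal J S).comap (LinearMap.mulLeft ℂ T)) hY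
    · exact (Submodule.span_singleton_le_iff_mem _ _).2 (Submodule.mem_sup_right (h T).1)
    · exact fun X hX =>
        Submodule.mem_sup_right (principalNSpan.mul_mem_left_of_mul_mem hJ (h T).1 hX)
  · refine (sup_le ?_ ?_ : _ ≤ (principalSubideal J S).comap (LinearMap.mulRight ℂ T)) hY
    · exact (Submodule.span_singleton_le_iff_mem _ _).2 (Submodule.mem_sup_right (h T).2)
    · exact fun X hX =>
        Submodule.mem_sup_right (principalNSpan.mul_mem_right_of_mul_mem hJ (h T).2 hX)

lemma conj_sub_mem (hJ : IsBHIdeal J) {U V : E →L[ℂ] E} (hU : U - 1 ∈ J) (hV : V - 1 ∈ J)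
    (hY : Y ∈ principalSubideal J S) : U * Y * V - Y ∈ principalNSpan J S := by
  have hUY := mul_left_mem_principalNSpan hJ hU hY
  rw [show U * Y * V - Y = (U - 1) * Y + Y * (V - 1) + (U - 1) * Y * (V - 1) by noncomm_ring]
  exact add_mem (add_mem hUY (mul_right_mem_principalNSpan hJ hV hY))
    (principalNSpan.mul_mem_right hJ hV hUY)

end principalSubideal

lemma subidealGen_singleton_eq (hJ : IsBHIdeal J) (hS : S ∈ J) :
    subidealGen J {S} = principalSubideal J S := by
  refine (Set.sInter_subset_of_mem (t := (principalSubideal J S : Set (E →L[ℂ] E)))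
    (show _ ∧ _ from ⟨principalSubideal.isSubideal hJ hS, Set.singleton_subset_iff.2
      (Submodule.mem_sup_left (Submodule.mem_span_singleton_self S))⟩)).antisymm
      (Set.subset_sInter ?_)
  rintro I ⟨hI, hSI⟩
  have hSI : S ∈ I := hSI rfl
  have hmul := hI.2.2.2.2
  exact (sup_le ((Submodule.span_singleton_le_iff_mem _ _).2 hSI)
    (principalNSpan.le_of_forall (fun A hA => (hmul A hA S hSI).1)
      (fun B hB => (hmul B hB S hSI).2) fun A hA B hB => (hmul B hB _ (hmul A hA S hSI).1).2) :
    _ ≤ hI.toSubmodule)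

lemma star_sub_one_mem [CompleteSpace E] (hJ : IsBHIdeal J) {U : E →L[ℂ] E}
    (hU : U ∈ unitaryJ J) : star U - 1 ∈ J := by
  rw [show star U - 1 = -star U * (U - 1) by
    rw [neg_mul, mul_sub, Unitary.star_mul_self_of_mem hU.1, mul_one, neg_sub]]
  exact hJ.mul_mem_left _ hU.2

end Algebra

lemma Submodule.exists_dual_eq_one_of_notMem {K V : Type*} [Field K] [AddCommGroup V]
    [Module K V] {p : Submodule K V} {x : V} (hx : x ∉ p) :
    ∃ τ : Module.Dual K V, τ x = 1 ∧ ∀ y ∈ p, τ y = 0 := by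
  obtain ⟨f, hfx, hfp⟩ := Submodule.exists_dual_map_eq_bot_of_notMem hx inferInstance
  refine ⟨(f x)⁻¹ • f, by simp [hfx], fun y hy => ?_⟩
  have : f y ∈ (⊥ : Submodule K K) := hfp ▸ Submodule.mem_map_of_mem hy
  rw [Submodule.mem_bot] at this
  simp [this]

section FiniteRank

variable {𝕜 E : Type*} [RCLike 𝕜] [NormedAddCommGroup E] [InnerProductSpace 𝕜 E]
  {F : E →L[𝕜] E}

variable (𝕜 E) in
def finiteRank : Submodule 𝕜 (E →L[𝕜] E) :=
  Submodule.span 𝕜 (Set.range fun p : E × E => rankOne 𝕜 p.1 p.2)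

namespace finiteRank

lemma rankOne_mem (u v : E) : rankOne 𝕜 u v ∈ finiteRank 𝕜 E :=
  Submodule.subset_span ⟨(u, v), rfl⟩

lemma mul_mem (T : E →L[𝕜] E) (hF : F ∈ finiteRank 𝕜 E) : T * F ∈ finiteRank 𝕜 E := by
  refine (Submodule.span_le (p := (finiteRank 𝕜 E).comap (LinearMap.mulLeft 𝕜 T))).2 ?_ hF
  rintro _ ⟨⟨u, v⟩, rfl⟩
  simpa [mul_def, comp_rankOne] using rankOne_mem (T u) v

lemma mem_mul [CompleteSpace E] (T : E →L[𝕜] E) (hF : F ∈ finiteRank 𝕜 E) :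
    F * T ∈ finiteRank 𝕜 E := by
  refine (Submodule.span_le (p := (finiteRank 𝕜 E).comap (LinearMap.mulRight 𝕜 T))).2 ?_ hF
  rintro _ ⟨⟨u, v⟩, rfl⟩
  simpa [mul_def, rankOne_comp] using rankOne_mem u (adjoint T v)

lemma starProjection_mem (W : Submodule 𝕜 E) [FiniteDimensional 𝕜 W] :
    W.starProjection ∈ finiteRank 𝕜 E := by
  rw [(stdOrthonormalBasis 𝕜 W).starProjection_eq_sum_rankOne]
  exact Submodule.sum_mem _ fun i _ => rankOne_mem _ _

end finiteRank

lemma rankOne_eq_mul_mul {S : E →L[𝕜] E} {x : E} (hx : S x ≠ 0) (u v : E) :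
    rankOne 𝕜 u v = rankOne 𝕜 ((inner 𝕜 (S x) (S x))⁻¹ • u) (S x) * S * rankOne 𝕜 x v := by
  rw [mul_assoc, mul_def S, comp_rankOne, mul_def, rankOne_comp_rankOne, map_smul,
    smul_apply, smul_smul, mul_inv_cancel₀ (inner_self_ne_zero.2 hx), one_smul]

variable [CompleteSpace E]

lemma IsCompactOperator.exists_finiteRank_norm_sub_lt {A : E →L[𝕜] E}
    (hA : IsCompactOperator A) {ε : ℝ} (hε : 0 < ε) : ∃ F ∈ finiteRank 𝕜 E, ‖A - F‖ < ε := by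
  obtain ⟨t, -, ht, hcover⟩ := Metric.finite_approx_of_totallyBounded
    (hA.isCompact_closure_image_closedBall (f := A.toLinearMap) 1).totallyBounded (ε / 2)
    (half_pos hε)
  let W := Submodule.span 𝕜 t
  have : FiniteDimensional 𝕜 W := FiniteDimensional.span_of_finite 𝕜 ht
  refine ⟨W.starProjection * A, finiteRank.mem_mul A (finiteRank.starProjection_mem W),
    (opNorm_le_of_unit_norm (half_pos hε).le fun x hx => ?_).trans_lt (half_lt_self hε)⟩
  obtain ⟨y, hyt, hy⟩ := Set.mem_iUnion₂.1 <| hcover <| subset_closure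
    (show A x ∈ A.toLinearMap '' Metric.closedBall 0 1 from ⟨x, by simp [hx], rfl⟩)
  calc ‖(A - W.starProjection * A) x‖ = ⨅ z : W, ‖A x - z‖ := W.starProjection_minimal (A x)
    _ ≤ ‖A x - y‖ := ciInf_le (f := fun z : W => ‖A x - z‖)
        ⟨0, by rintro _ ⟨z, rfl⟩; positivity⟩ ⟨y, Submodule.subset_span hyt⟩
    _ ≤ ε / 2 := (mem_ball_iff_norm.1 hy).le

lemma IsCompactOperator.exists_one_sub_eq_unit_sub {A : E →L[𝕜] E} (hA : IsCompactOperator A) :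
    ∃ G : (E →L[𝕜] E)ˣ, ∃ F ∈ finiteRank 𝕜 E, 1 - A = G - F := by
  obtain ⟨F, hF, hAF⟩ := hA.exists_finiteRank_norm_sub_lt one_pos
  exact ⟨Units.oneSub (A - F) hAF, F, hF, by rw [Units.val_oneSub]; abel⟩

end FiniteRank

section Compact

variable {𝕜 E F : Type*} [RCLike 𝕜] [NormedAddCommGroup E] [InnerProductSpace 𝕜 E]
  [CompleteSpace E] [NormedAddCommGroup F] [InnerProductSpace 𝕜 F] [CompleteSpace F]

lemma norm_apply_sub_sq_le (B : E →L[𝕜] F) (x y : E) :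
    ‖B x - B y‖ ^ 2 ≤ ‖(adjoint B ∘L B) x - (adjoint B ∘L B) y‖ * ‖x - y‖ := by
  rw [← map_sub, ← map_sub, apply_norm_sq_eq_inner_adjoint_left]
  exact (RCLike.re_le_norm _).trans (norm_inner_le_norm _ _)

/-- By `norm_apply_sub_sq_le`, an `ε²/4`-net for `B*B` on the unit ball gives an `ε`-net for `B`. -/
lemma IsCompactOperator.of_adjoint_comp_self {B : E →L[𝕜] F}
    (h : IsCompactOperator (adjoint B ∘L B)) : IsCompactOperator B := by
  refine (isCompactOperator_iff_isCompact_closure_image_closedBall (B : E →ₗ[𝕜] F) zero_lt_one).2 ?_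
  refine (TotallyBounded.closure ?_).isCompact_of_isClosed isClosed_closure
  rw [Metric.totallyBounded_iff]
  intro ε hε
  have hP := (h.isCompact_closure_image_closedBall
    (f := (adjoint B ∘L B : E →ₗ[𝕜] E)) 1).totallyBounded.subset subset_closure
  obtain ⟨t, hts, htf, hcover⟩ := Set.exists_subset_image_finite_and.1
    (Metric.finite_approx_of_totallyBounded hP (ε ^ 2 / 4) (by positivity))
  refine ⟨B '' t, htf.image _, ?_⟩
  rintro _ ⟨x, hx, rfl⟩
  obtain ⟨_, ⟨y, hyt, rfl⟩, hxy⟩ := Set.mem_iUnion₂.1 (hcover ⟨x, hx, rfl⟩)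
  refine Set.mem_iUnion₂.2 ⟨B y, ⟨y, hyt, rfl⟩, ?_⟩
  rw [Metric.mem_ball, dist_eq_norm] at hxy ⊢
  simp only [ContinuousLinearMap.coe_coe] at hxy ⊢
  have hxy2 : ‖x - y‖ ≤ 2 := by
    have := hts hyt
    simp only [Metric.mem_closedBall, dist_zero_right] at hx this
    linarith [norm_sub_le x y]
  have : ‖B x - B y‖ ^ 2 < ε ^ 2 := calc
    _ ≤ _ := norm_apply_sub_sq_le B x y
    _ ≤ ε ^ 2 / 4 * 2 := mul_le_mul hxy.le hxy2 (norm_nonneg _) (by positivity)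
    _ < ε ^ 2 := by linarith [pow_pos hε 2]
  nlinarith [norm_nonneg (B x - B y)]

end Compact

section Isometry

variable {𝕜 E : Type*} [RCLike 𝕜] [NormedAddCommGroup E] [InnerProductSpace 𝕜 E]

lemma Orthonormal.countable [TopologicalSpace.SeparableSpace E] {ι : Type*} {v : ι → E}
    (hv : Orthonormal 𝕜 v) : Countable ι := by
  refine Pairwise.countable_of_isOpen_disjoint (s := fun i => Metric.ball (v i) (1 / 2))
    (fun i j hij => Metric.ball_disjoint_ball ?_) (fun _ => Metric.isOpen_ball)
    (fun i => ⟨v i, Metric.mem_ball_self one_half_pos⟩)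
  have : ‖v i - v j‖ ^ 2 = 2 := by
    rw [@norm_sub_sq 𝕜, hv.inner_eq_zero hij, hv.norm_eq_one, hv.norm_eq_one]
    norm_num
  rw [dist_eq_norm]
  nlinarith [norm_nonneg (v i - v j)]

lemma exists_hilbertBasis_nat [CompleteSpace E] [TopologicalSpace.SeparableSpace E]
    (hE : ¬FiniteDimensional 𝕜 E) : Nonempty (HilbertBasis ℕ 𝕜 E) := by
  obtain ⟨w, b, -⟩ := exists_hilbertBasis 𝕜 E
  have : Countable w := b.orthonormal.countable
  have : Infinite w := by
    refine Set.infinite_coe_iff.2 fun hw => hE ?_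
    have : Fintype w := hw.fintype
    exact Module.Finite.of_basis b.toOrthonormalBasis.toBasis
  obtain ⟨_⟩ := nonempty_denumerable w
  let e := (Denumerable.eqv w).symm
  refine ⟨HilbertBasis.mk (b.orthonormal.comp e e.injective) ?_⟩
  rw [Set.range_comp, e.range_eq_univ, Set.image_univ, b.dense_span]

lemma Submodule.exists_isometry_into [CompleteSpace E] [TopologicalSpace.SeparableSpace E]
    (W : Submodule 𝕜 E) (hE : ¬FiniteDimensional 𝕜 E) (hW : IsClosed (W : Set E))
    (hWE : ¬FiniteDimensional 𝕜 W) :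
    ∃ V : E →L[𝕜] E, (∀ x, V x ∈ W) ∧ adjoint V * V = 1 := by
  have : CompleteSpace W := hW.completeSpace_coe
  obtain ⟨bE⟩ := exists_hilbertBasis_nat hE
  obtain ⟨bW⟩ := exists_hilbertBasis_nat hWE
  let V := W.subtypeL ∘L (bE.repr.trans bW.repr.symm).toContinuousLinearEquiv.toContinuousLinearMap
  refine ⟨V, fun x => Subtype.coe_prop _, ?_⟩
  rw [ContinuousLinearMap.mul_def, ← isometry_iff_adjoint_comp_self, AddMonoidHomClass.isometry_iff_norm]
  exact fun x => (bE.repr.trans bW.repr.symm).norm_map x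

end Isometry

lemma isCompactOperator_of_forall_mem {𝕜 E F : Type*} [NontriviallyNormedField 𝕜]
    [CompleteSpace 𝕜] [NormedAddCommGroup E] [NormedSpace 𝕜 E] [NormedAddCommGroup F]
    [NormedSpace 𝕜 F] [ProperSpace 𝕜] {T : E →L[𝕜] F} (W : Submodule 𝕜 F) [FiniteDimensional 𝕜 W]
    (hT : ∀ x, T x ∈ W) : IsCompactOperator T :=
  have : ProperSpace W := FiniteDimensional.proper 𝕜 W
  (isCompactOperator_of_locallyCompactSpace_dom (T.codRestrict W hT)).clm_comp W.subtypeL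

section Cutoff

noncomputable def cutoff (δ t : ℝ) : ℝ := min 1 (max ((|t| - δ) / δ) 0)

lemma continuous_cutoff (δ : ℝ) : Continuous (cutoff δ) := by
  unfold cutoff
  fun_prop

lemma cutoff_eq_zero {δ t : ℝ} (hδ : 0 < δ) (ht : |t| ≤ δ) : cutoff δ t = 0 := by
  rw [cutoff, max_eq_right (div_nonpos_of_nonpos_of_nonneg (by linarith) hδ.le)]
  norm_num

lemma cutoff_eq_one {δ t : ℝ} (hδ : 0 < δ) (ht : 2 * δ ≤ |t|) : cutoff δ t = 1 := by
  rw [cutoff, min_eq_left]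
  exact le_max_of_le_left ((le_div_iff₀ hδ).2 (by linarith))

lemma abs_mul_one_sub_cutoff_le {δ : ℝ} (hδ : 0 < δ) (t : ℝ) : |t * (1 - cutoff δ t)| ≤ 2 * δ := by
  rcases le_or_gt |t| (2 * δ) with ht | ht
  · have h0 : 0 ≤ cutoff δ t := le_min zero_le_one (le_max_right _ _)
    have h1 : cutoff δ t ≤ 1 := min_le_left _ _
    rw [abs_mul, abs_of_nonneg (show 0 ≤ 1 - cutoff δ t by linarith)]
    nlinarith [abs_nonneg t]
  · rw [cutoff_eq_one hδ ht.le]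
    simp [hδ.le]

lemma cutoff_half_mul_cutoff {δ : ℝ} (hδ : 0 < δ) (t : ℝ) :
    cutoff (δ / 2) t * cutoff δ t = cutoff δ t := by
  rcases le_or_gt |t| δ with ht | ht
  · rw [cutoff_eq_zero hδ ht, mul_zero]
  · rw [cutoff_eq_one (half_pos hδ) (by linarith), one_mul]

lemma exists_continuous_mul_eq_cutoff {δ : ℝ} (hδ : 0 < δ) :
    ∃ g : ℝ → ℝ, Continuous g ∧ ∀ t, t * g t = cutoff δ t := by
  refine ⟨fun t => cutoff δ t * t / max (t ^ 2) (δ ^ 2), ?_, fun t => ?_⟩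
  · exact ((continuous_cutoff δ).mul continuous_id).div (by fun_prop)
      fun t => (lt_max_of_lt_right (pow_pos hδ 2)).ne'
  rcases le_or_gt |t| δ with ht | ht
  · simp [cutoff_eq_zero hδ ht]
  · have ht0 : t ≠ 0 := by rintro rfl; simp at ht; linarith
    show t * (cutoff δ t * t / max (t ^ 2) (δ ^ 2)) = _
    rw [max_eq_left (sq_le_sq.2 (by rw [abs_of_pos hδ]; exact ht.le))]
    field_simp

end Cutoff

section Calkin

open Filter Topology

variable {E : Type*} [NormedAddCommGroup E] [InnerProductSpace ℂ E] [CompleteSpace E]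
  {P : E →L[ℂ] E}

lemma norm_mul_cfc_cutoff_sub_le (hP : IsSelfAdjoint P) {δ : ℝ} (hδ : 0 < δ) :
    ‖P * cfc (cutoff δ) P - P‖ ≤ 2 * δ := by
  have hc := continuous_cutoff δ
  have : P * cfc (cutoff δ) P - P = cfc (fun t => t * cutoff δ t - t) P := by
    rw [cfc_sub _ _ P, cfc_mul _ _ P, cfc_id' ℝ P]
  rw [this]
  refine norm_cfc_le (by positivity) fun t _ => ?_
  rw [Real.norm_eq_abs, show t * cutoff δ t - t = -(t * (1 - cutoff δ t)) by ring, abs_neg]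
  exact abs_mul_one_sub_cutoff_le hδ t

/-- `P` is the norm limit of `P * cutoff δ (P)` as `δ → 0`. -/
lemma exists_not_isCompactOperator_cfc_cutoff (hP : IsSelfAdjoint P)
    (hnc : ¬IsCompactOperator P) : ∃ δ > 0, ¬IsCompactOperator (cfc (cutoff δ) P : E →L[ℂ] E) := by
  by_contra! h
  refine hnc (isCompactOperator_of_tendsto (l := 𝓝[>] (0 : ℝ))
    (F := fun δ => P * cfc (cutoff δ) P) ?_ (eventually_nhdsWithin_of_forall fun δ hδ =>
      (h δ hδ).clm_comp P))
  rw [tendsto_iff_norm_sub_tendsto_zero]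
  refine squeeze_zero' (.of_forall fun _ => norm_nonneg _)
    (eventually_nhdsWithin_of_forall fun δ hδ => norm_mul_cfc_cutoff_sub_le hP hδ) ?_
  exact tendsto_nhdsWithin_of_tendsto_nhds (by simpa using (continuous_const_mul (2 : ℝ)).tendsto 0)

lemma IsBHIdeal.cfc_cutoff_mem {J : Set (E →L[ℂ] E)} (hJ : IsBHIdeal J) (hPJ : P ∈ J)
    (hP : IsSelfAdjoint P) {δ : ℝ} (hδ : 0 < δ) : cfc (cutoff δ) P ∈ J := by
  obtain ⟨g, hg, hgt⟩ := exists_continuous_mul_eq_cutoff hδ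
  have : cfc (cutoff δ) P = P * cfc g P := by
    rw [← funext hgt, cfc_mul _ _ P, cfc_id' ℝ P]
  rw [this]
  exact hJ.mul_mem_right _ hPJ

/-- Calkin's argument: a spectral cutoff `Q ∈ J` of `B*B` is the identity on an
infinite-dimensional closed subspace `W`, so `V* Q V = 1` for an isometry `V` into `W`. -/
lemma IsBHIdeal.one_mem_of_not_isCompactOperator [TopologicalSpace.SeparableSpace E]
    {J : Set (E →L[ℂ] E)} (hJ : IsBHIdeal J) (hinf : ¬FiniteDimensional ℂ E) {B : E →L[ℂ] E}
    (hB : B ∈ J) (hnc : ¬IsCompactOperator B) :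
    (1 : E →L[ℂ] E) ∈ J := by
  have hP : IsSelfAdjoint (adjoint B * B) := by
    simpa [star_eq_adjoint] using IsSelfAdjoint.star_mul_self B
  obtain ⟨δ, hδ, hnc'⟩ := exists_not_isCompactOperator_cfc_cutoff hP
    fun h => hnc (IsCompactOperator.of_adjoint_comp_self h)
  set Q := cfc (cutoff (δ / 2)) (adjoint B * B)
  have hQ : Q ∈ J := hJ.cfc_cutoff_mem (hJ.mul_mem_left _ hB) hP (half_pos hδ)
  have hQQ' : Q * cfc (cutoff δ) (adjoint B * B) = cfc (cutoff δ) (adjoint B * B) := by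
    have := continuous_cutoff
    rw [← cfc_mul _ _ (adjoint B * B), funext (cutoff_half_mul_cutoff hδ)]
  have hW : ∀ x, cfc (cutoff δ) (adjoint B * B) x ∈ (Q - 1).ker := fun x => by
    simpa [sub_eq_zero] using congr($hQQ' x)
  obtain ⟨V, hVW, hV⟩ := (Q - 1).ker.exists_isometry_into hinf (isClosed_ker _)
    fun _ => hnc' (isCompactOperator_of_forall_mem _ hW)
  have hQV : Q * V = V := ext fun x => by simpa [sub_eq_zero] using hVW x
  rw [← hV, ← hQV, ← mul_assoc]
  exact hJ.mul_mem_right V (hJ.mul_mem_left _ hQ)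

end Calkin

section Principal

variable {E : Type*} [NormedAddCommGroup E] [InnerProductSpace ℂ E] {J : Set (E →L[ℂ] E)}
  {S : E →L[ℂ] E}

lemma finiteRank.le_principalNSpan (hJ : IsBHIdeal J) (hS : S ∈ J) (hS0 : S ≠ 0) :
    finiteRank ℂ E ≤ principalNSpan J S := by
  obtain ⟨x, hx⟩ : ∃ x, S x ≠ 0 := by simpa [ContinuousLinearMap.ext_iff] using hS0
  have hJ1 : ∀ u v, rankOne ℂ u v ∈ J := fun u v => by
    rw [rankOne_eq_mul_mul hx]
    exact hJ.mul_mem_right _ (hJ.mul_mem_left _ hS)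
  rw [finiteRank, Submodule.span_le]
  rintro _ ⟨⟨u, v⟩, rfl⟩
  change rankOne ℂ u v ∈ principalNSpan J S
  rw [rankOne_eq_mul_mul hx]
  exact principalNSpan.sandwich_mem (hJ1 _ _) (hJ1 _ _)

variable [CompleteSpace E]

/-- If `S = A₀S + SB₀ + Σ AᵢSBᵢ` with `A₀, B₀` compact, inverting `1 - A₀` and `1 - B₀` modulo
finite rank writes `S` as a finite-rank operator plus `L (1 - A₀) S (1 - B₀) R`, where
`(1 - A₀) S (1 - B₀) = A₀SB₀ + Σ AᵢSBᵢ`. Both parts stay in `N` under multiplication by `B(H)`. -/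
lemma mul_mem_principalNSpan_of_isCompactOperator (hJ : IsBHIdeal J)
    (hcpt : ∀ A ∈ J, IsCompactOperator A) (hS : S ∈ J) (hS0 : S ≠ 0)
    (hSN : S ∈ principalN J S) (T : E →L[ℂ] E) :
    T * S ∈ principalNSpan J S ∧ S * T ∈ principalNSpan J S := by
  obtain ⟨A₀, hA₀, B₀, hB₀, m, A, B, hA, hB, hSrep⟩ := hSN
  obtain ⟨G₁, F₁, hF₁, h₁⟩ := (hcpt A₀ hA₀).exists_one_sub_eq_unit_sub
  obtain ⟨G₂, F₂, hF₂, h₂⟩ := (hcpt B₀ hB₀).exists_one_sub_eq_unit_sub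
  obtain ⟨L, hL⟩ : ∃ L, L * (1 - A₀) = 1 - L * F₁ := ⟨↑G₁⁻¹, by rw [h₁, mul_sub, Units.inv_mul]⟩
  obtain ⟨R, hR⟩ : ∃ R, (1 - B₀) * R = 1 - F₂ * R := ⟨↑G₂⁻¹, by rw [h₂, sub_mul, Units.mul_inv]⟩
  have hK : (1 - A₀) * S * (1 - B₀) = A₀ * S * B₀ + ∑ i, A i * S * B i := by
    have : S - A₀ * S - S * B₀ = ∑ i, A i * S * B i :=
      (sub_sub _ _ _).trans (sub_eq_iff_eq_add'.2 hSrep)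
    rw [← this]
    noncomm_ring
  have hsandwich : ∀ X Y, X * ((1 - A₀) * S * (1 - B₀)) * Y ∈ principalNSpan J S := fun X Y => by
    rw [hK, mul_add, add_mul]
    exact add_mem (principalNSpan.mul_sandwich_mul_mem hJ hA₀ hB₀ X Y)
      (principalNSpan.mul_sum_sandwich_mul_mem hJ hA hB X Y)
  have hD : S - L * ((1 - A₀) * S * (1 - B₀)) * R ∈ finiteRank ℂ E := by
    rw [show L * ((1 - A₀) * S * (1 - B₀)) * R = (L * (1 - A₀)) * S * ((1 - B₀) * R) by
      noncomm_ring, hL, hR, show ∀ P Q : E →L[ℂ] E,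
        S - (1 - P) * S * (1 - Q) = P * S + (1 - P) * S * Q by intros; noncomm_ring]
    exact add_mem (finiteRank.mem_mul S (finiteRank.mul_mem L hF₁))
      (finiteRank.mul_mem _ (finiteRank.mem_mul R hF₂))
  have hle := finiteRank.le_principalNSpan hJ hS hS0
  constructor
  · rw [show T * S = T * (S - L * ((1 - A₀) * S * (1 - B₀)) * R)
      + (T * L) * ((1 - A₀) * S * (1 - B₀)) * R by noncomm_ring]
    exact add_mem (hle (finiteRank.mul_mem T hD)) (hsandwich _ _)
  · rw [show S * T = (S - L * ((1 - A₀) * S * (1 - B₀)) * R) * T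
      + L * ((1 - A₀) * S * (1 - B₀)) * (R * T) by noncomm_ring]
    exact add_mem (hle (finiteRank.mem_mul T hD)) (hsandwich _ _)

lemma mul_mem_principalNSpan_of_self_mem [TopologicalSpace.SeparableSpace E] (hJ : IsBHIdeal J)
    (hinf : ¬FiniteDimensional ℂ E) (hS : S ∈ J) (hSN : S ∈ principalNSpan J S) (T : E →L[ℂ] E) :
    T * S ∈ principalNSpan J S ∧ S * T ∈ principalNSpan J S := by
  rcases eq_or_ne S 0 with rfl | hS0
  · simp
  by_cases h1 : (1 : E →L[ℂ] E) ∈ J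
  · have hT : T ∈ J := by simpa using hJ.mul_mem_left T h1
    exact ⟨principalNSpan.left_mem hT, principalNSpan.right_mem hT⟩
  refine mul_mem_principalNSpan_of_isCompactOperator hJ (fun A hA => ?_) hS hS0
    ((mem_principalN_iff hJ).2 hSN) T
  by_contra hA'
  exact h1 (hJ.one_mem_of_not_isCompactOperator hinf hA hA')

lemma isBHIdeal_subidealGen_of_mem [TopologicalSpace.SeparableSpace E] (hJ : IsBHIdeal J)
    (hinf : ¬FiniteDimensional ℂ E) (hS : S ∈ J) (hSN : S ∈ principalNSpan J S) :
    IsBHIdeal (subidealGen J {S}) := by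
  rw [subidealGen_singleton_eq hJ hS]
  exact principalSubideal.isBHIdeal hJ (mul_mem_principalNSpan_of_self_mem hJ hinf hS hSN)

end Principal

/-- when `(S)_J` is not a `B(H)`-ideal, `(S)_J = ℂS ⊕ N` and
`τ(αS + X) := α` is a well-defined subideal-trace on `(S)_J`. -/
theorem principal_subideal_trace (J : Set (H →L[ℂ] H)) (hJ : IsBHIdeal J)
    (hinf : ¬FiniteDimensional ℂ H) (S : H →L[ℂ] H) (hS : S ∈ J)
    (hnot : ¬IsBHIdeal (subidealGen J {S})) :
    (∀ (α β : ℂ) (X Y : H →L[ℂ] H), X ∈ principalN J S → Y ∈ principalN J S →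
        α • S + X = β • S + Y → α = β) ∧
      subidealGen J {S} = {T | ∃ (α : ℂ), ∃ X ∈ principalN J S, T = α • S + X} ∧
      ∃ τ : (H →L[ℂ] H) → ℂ,
        (∀ (α : ℂ), ∀ X ∈ principalN J S, τ (α • S + X) = α) ∧
        (∀ x ∈ subidealGen J {S}, ∀ y ∈ subidealGen J {S}, τ (x + y) = τ x + τ y) ∧
        (∀ (c : ℂ), ∀ x ∈ subidealGen J {S}, τ (c • x) = c * τ x) ∧
        (∀ Y ∈ subidealGen J {S}, ∀ U ∈ unitaryJ J, τ (U * Y * star U) = τ Y) := by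
  have hSN : S ∉ principalNSpan J S := fun h => hnot (isBHIdeal_subidealGen_of_mem hJ hinf hS h)
  obtain ⟨τ, hτS, hτN⟩ := Submodule.exists_dual_eq_one_of_notMem hSN
  have hτ : ∀ (α : ℂ), ∀ X ∈ principalN J S, τ (α • S + X) = α := fun α X hX => by
    simp [hτS, hτN X ((mem_principalN_iff hJ).1 hX)]
  have hgen := subidealGen_singleton_eq hJ hS
  refine ⟨fun α β X Y hX hY h => by rw [← hτ α X hX, h, hτ β Y hY],
    hgen.trans (coe_principalSubideal hJ), τ, hτ, fun x _ y _ => map_add τ x y,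
    fun c x _ => map_smul τ c x, fun Y hY U hU => ?_⟩
  rw [hgen] at hY
  have := hτN _ (principalSubideal.conj_sub_mem hJ hU.2 (star_sub_one_mem hJ hU) hY)
  rwa [map_sub, sub_eq_zero] at this
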